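/- arXiv:1712.00062 — 2 statements merged into one kernel-verified Lean document; each statement's English description precedes it below -/
import Mathlib

section
/- Let L > 0 and let (L_k)_{k≥1} be a sequence with 1/(3L) ≤ 1/L_k (i.e., L_k ≤ 3L for all k). Define α₀ = 0, A₀ = 0, α_{k+1} = (1 + √(1 + 4 A_k L_{k+1}))/(2 L_{k+1}), A_{k+1} = A_k + α_{k+1}. Then A_k ≥ (k+1)²/(12L) for all k ≥ 1. -/
/-!
Writing `ℓ = L_{k+1}`, the bound `√(1 + 4 A_k ℓ) ≥ 2 √(A_k ℓ)` gives
`α_{k+1} ≥ 1/(2ℓ) + √(A_k/ℓ)`, so `√A_{k+1} ≥ √A_k + 1/(2√ℓ) ≥ √A_k + 1/(2√(3L))`.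
Since `A_1 = 1/L_1 ≥ 1/(3L)`, the square roots start at `2/(2√(3L))` and grow by at least
`1/(2√(3L))` per step, whence `√A_k ≥ (k+1)/(2√(3L))`.
-/

open Real

theorem sq_add_inv_two_mul_sqrt_le {A ℓ t : ℝ} (hℓ : 0 < ℓ) (htA : t ^ 2 ≤ A) :
    (t + 1 / (2 * √ℓ)) ^ 2 ≤ A + (1 + √(1 + 4 * A * ℓ)) / (2 * ℓ) := by
  set r := √ℓ
  have hr : 0 < r := sqrt_pos.2 hℓ
  have hr2 : r ^ 2 = ℓ := sq_sqrt hℓ.le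
  have hroot : 2 * t * r ≤ √(1 + 4 * A * ℓ) :=
    le_sqrt_of_sq_le (by nlinarith [mul_le_mul_of_nonneg_right htA hℓ.le])
  calc (t + 1 / (2 * r)) ^ 2 ≤ t ^ 2 + (1 + 2 * t * r) / (2 * ℓ) := by
        rw [← hr2]
        field_simp
        nlinarith [sq_nonneg r]
    _ ≤ A + (1 + √(1 + 4 * A * ℓ)) / (2 * ℓ) := by gcongr

theorem sq_div_two_mul_sqrt_le_of_recursion {M : ℝ} {L A : ℕ → ℝ}
    (hL : ∀ k, 1 ≤ k → 0 < L k ∧ L k ≤ M) (hA0 : A 0 = 0)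
    (hA : ∀ k, A (k + 1) = A k + (1 + √(1 + 4 * A k * L (k + 1))) / (2 * L (k + 1))) :
    ∀ k : ℕ, 1 ≤ k → (((k : ℝ) + 1) / (2 * √M)) ^ 2 ≤ A k := by
  obtain ⟨hL1, hL1M⟩ := hL 1 le_rfl
  intro k hk
  induction k, hk using Nat.le_induction with
  | base =>
    have hA1 : A 1 = 1 / L 1 := by
      rw [hA 0, hA0]
      norm_num
      field_simp
    calc ((((1 : ℕ) : ℝ) + 1) / (2 * √M)) ^ 2 = 1 / M := by
          rw [div_pow, mul_pow, sq_sqrt (hL1.le.trans hL1M)]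
          ring
      _ ≤ A 1 := hA1 ▸ one_div_le_one_div_of_le hL1 hL1M
  | succ k hk ih =>
    obtain ⟨hLk, hLkM⟩ := hL (k + 1) (by omega)
    have hsqrt : √(L (k + 1)) ≤ √M := sqrt_le_sqrt hLkM
    calc ((((k + 1 : ℕ) : ℝ) + 1) / (2 * √M)) ^ 2
        = (((k : ℝ) + 1) / (2 * √M) + 1 / (2 * √M)) ^ 2 := by push_cast; ring
      _ ≤ (((k : ℝ) + 1) / (2 * √M) + 1 / (2 * √(L (k + 1)))) ^ 2 := by gcongr
      _ ≤ A (k + 1) := hA k ▸ sq_add_inv_two_mul_sqrt_le hLk ih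

theorem A_growth_general (Lc : ℝ) (hLc : 0 < Lc)
    (L α A : ℕ → ℝ)
    (hL : ∀ k, 1 ≤ k → 0 < L k ∧ L k ≤ 3 * Lc)
    (hA0 : A 0 = 0)
    (hα : ∀ k, α (k + 1) =
      (1 + Real.sqrt (1 + 4 * A k * L (k + 1))) / (2 * L (k + 1)))
    (hA : ∀ k, A (k + 1) = A k + α (k + 1)) :
    ∀ k, 1 ≤ k → A k ≥ ((k : ℝ) + 1)^2 / (12 * Lc) := by
  intro k hk
  have key := sq_div_two_mul_sqrt_le_of_recursion hL hA0 (fun k => by rw [hA, hα]) k hk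
  rwa [div_pow, mul_pow, sq_sqrt (by positivity), show (2 : ℝ) ^ 2 * (3 * Lc) = 12 * Lc by ring]
    at key

/-- Growth of the accumulated weights: if `L_k ≤ 3L` for all `k ≥ 1`, then
`A_k ≥ (k+1)²/(12 L)` for all `k ≥ 1`. -/
theorem A_growth (Lc : ℝ) (hLc : 0 < Lc)
    (L α A : ℕ → ℝ)
    (hL : ∀ k, 1 ≤ k → 0 < L k ∧ L k ≤ 3 * Lc)
    (hα0 : α 0 = 0) (hA0 : A 0 = 0)
    (hα : ∀ k, α (k + 1) =
      (1 + Real.sqrt (1 + 4 * A k * L (k + 1))) / (2 * L (k + 1)))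
    (hA : ∀ k, A (k + 1) = A k + α (k + 1)) :
    ∀ k, 1 ≤ k → A k ≥ ((k : ℝ) + 1)^2 / (12 * Lc) :=
  A_growth_general Lc hLc L α A hL hA0 hα hA
end

section
/- Suppose (L_k) satisfies L_k > 0 for all k, α_k = (1 + √(1 + 4 A_{k-1} L_k))/(2 L_k) with A_k = A_{k-1} + α_k, A₀ = 0, and suppose 2 L_{k+1} ≥ L_k. Then α_{k+1} ≤ (4 + √2) α_k ≤ 6 α_k for all k ≥ 1, and consequently A_{k+1} ≤ 7 A_k. -/
/-!
`α_k` is the positive root of `L_k x² = x + A_{k-1}`, so `A_k = L_k α_k²` and `α_k ≥ 1/(2 L_k)`.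
Since `α_{k+1} ≤ 1/L_{k+1} + √(A_k / L_{k+1})`, the halving rule `L_k ≤ 2 L_{k+1}` bounds the first
term by `2/L_k ≤ 4 α_k` and the second by `α_k √(L_k / L_{k+1}) ≤ √2 α_k`.
Finally `A_{k+1} = A_k + α_{k+1} ≤ A_k + 6 α_k ≤ 7 A_k`, because `α_k ≤ A_k`.
-/

open Real

noncomputable section

def stepSize (L a : ℝ) : ℝ := (1 + √(1 + 4 * a * L)) / (2 * L)

namespace stepSize

variable {L L' a : ℝ}

theorem pos (hL : 0 < L) : 0 < stepSize L a := by
  unfold stepSize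
  positivity

theorem inv_two_mul_le (hL : 0 < L) : 1 / (2 * L) ≤ stepSize L a := by
  unfold stepSize
  gcongr
  exact le_add_of_nonneg_right (sqrt_nonneg _)

theorem mul_sq (hL : 0 < L) (ha : 0 ≤ a) : L * stepSize L a ^ 2 = stepSize L a + a := by
  have hs : √(1 + 4 * a * L) ^ 2 = 1 + 4 * a * L := sq_sqrt (by positivity)
  unfold stepSize
  generalize √(1 + 4 * a * L) = s at hs ⊢
  field_simp
  linear_combination hs

theorem le_inv_add_sqrt (hL : 0 < L) (ha : 0 ≤ a) : stepSize L a ≤ 1 / L + √(a / L) := by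
  set y := √(a / L)
  have hy : L * y ^ 2 = a := by
    rw [sq_sqrt (by positivity)]
    field_simp
  have hroot : √(1 + 4 * a * L) ≤ 1 + 2 * L * y := by
    rw [sqrt_le_left (by positivity), ← hy]
    nlinarith [mul_nonneg hL.le (sqrt_nonneg (a / L))]
  unfold stepSize
  rw [div_le_iff₀ (by positivity)]
  calc 1 + √(1 + 4 * a * L) ≤ 2 + 2 * L * y := by linarith
    _ = (1 / L + y) * (2 * L) := by field_simp

theorem next_le (hL : 0 < L) (hL' : 0 < L') (hhalve : L ≤ 2 * L') (ha : 0 ≤ a) :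
    stepSize L' (a + stepSize L a) ≤ (4 + √2) * stepSize L a := by
  set x := stepSize L a
  have hx : 0 < x := pos hL
  have hinv : 1 / L' ≤ 4 * x := by
    calc 1 / L' ≤ 2 / L := by rw [div_le_div_iff₀ hL' hL]; linarith
      _ = 4 * (1 / (2 * L)) := by field_simp; norm_num
      _ ≤ 4 * x := by gcongr; exact inv_two_mul_le hL
  have hsqrt : √((a + x) / L') ≤ √2 * x := by
    rw [add_comm, ← mul_sq hL ha, mul_div_right_comm, sqrt_mul (by positivity), sqrt_sq hx.le]
    gcongr
    rw [div_le_iff₀ hL']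
    linarith
  calc stepSize L' (a + x) ≤ 1 / L' + √((a + x) / L') := le_inv_add_sqrt hL' (by positivity)
    _ ≤ 4 * x + √2 * x := add_le_add hinv hsqrt
    _ = (4 + √2) * x := by ring

end stepSize

end

/-- If the line-search constants satisfy `2 L_{k+1} ≥ L_k`, then the step sizes
satisfy `α_{k+1} ≤ (4 + √2) α_k ≤ 6 α_k`, hence `A_{k+1} ≤ 7 A_k`. -/
theorem alpha_ratio_bound
    (L α A : ℕ → ℝ)
    (hL : ∀ k, 0 < L k)
    (hhalve : ∀ k, 2 * L (k + 1) ≥ L k)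
    (hA0 : A 0 = 0)
    (hα : ∀ k, 1 ≤ k → α k =
      (1 + Real.sqrt (1 + 4 * A (k - 1) * L k)) / (2 * L k))
    (hA : ∀ k, 1 ≤ k → A k = A (k - 1) + α k) :
    ∀ k, 1 ≤ k →
      α (k + 1) ≤ (4 + Real.sqrt 2) * α k ∧
      (4 + Real.sqrt 2) * α k ≤ 6 * α k ∧
      A (k + 1) ≤ 7 * A k := by
  have hα' : ∀ k, α (k + 1) = stepSize (L (k + 1)) (A k) := fun k => hα (k + 1) k.succ_pos
  have hA' : ∀ k, A (k + 1) = A k + α (k + 1) := fun k => hA (k + 1) k.succ_pos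
  have hA_nonneg : ∀ k, 0 ≤ A k := by
    intro k
    induction k with
    | zero => exact hA0.ge
    | succ k ih => rw [hA', hα']; exact add_nonneg ih (stepSize.pos (hL _)).le
  have hsqrt2 : √2 ≤ 2 := by rw [sqrt_le_left zero_le_two]; norm_num
  intro k hk
  obtain ⟨k, rfl⟩ : ∃ j, k = j + 1 := ⟨k - 1, by omega⟩
  have hαk : 0 < α (k + 1) := hα' k ▸ stepSize.pos (hL _)
  have hratio : α (k + 2) ≤ (4 + √2) * α (k + 1) := by
    rw [hα' (k + 1), hA' k, hα' k]
    exact stepSize.next_le (hL _) (hL _) (hhalve _) (hA_nonneg k)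
  have hsix : (4 + √2) * α (k + 1) ≤ 6 * α (k + 1) := by gcongr; linarith
  refine ⟨hratio, hsix, ?_⟩
  have hαA : α (k + 1) ≤ A (k + 1) := by rw [hA' k]; linarith [hA_nonneg k]
  rw [hA' (k + 1)]
  linarith
end
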